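/- There is a well-defined ring homomorphism π from the affine nil-Coxeter ring R_aff (generated by divided difference operators D_0,...,D_n with D_i² = 0 and braid relations, acting on H*(Fl_G)) to the finite nil-Coxeter ring R (generated by BGG operators ∂_1,...,∂_n acting on H*(G/B)), sending D_i to ∂_i for i ≠ 0 and D_0 to ∂_{−θ}, where θ is the highest root of the finite root system. -/
import Mathlib


/-- Elements of the root lattice (resp. coroot lattice) of a finite root system,
in coordinates with respect to the simple roots (resp. simple coroots). -/
abbrev FinLat (n : ℕ) := Fin n → ℤ

/-- The evaluation pairing `⟨α, β∨⟩` of a root `a` against a coroot `b`, computed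
via the Cartan matrix `cartan i k = ⟨α_k, α_i∨⟩`. -/
def fpair {n : ℕ} (cartan : Fin n → Fin n → ℤ) (a b : FinLat n) : ℤ :=
  ∑ i, ∑ k, b i * (cartan i k * a k)

/-- Axiomatization of the (crystallographic, reduced, finite) root system `Π` of a
finite simple Lie algebra `g`, with its Cartan matrix, the coroot map `α ↦ α∨`
(in simple-coroot coordinates), and the highest root `θ`. -/
structure FiniteRootData (n : ℕ) where
  /-- the Cartan matrix: `cartan i j = ⟨α_j, α_i∨⟩` -/
  cartan : Fin n → Fin n → ℤ
  cartan_diag : ∀ i, cartan i i = 2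
  cartan_offdiag : ∀ i j, i ≠ j → cartan i j ≤ 0
  cartan_symm_zero : ∀ i j, cartan i j = 0 → cartan j i = 0
  /-- the set of roots, in simple-root coordinates -/
  roots : Set (FinLat n)
  roots_finite : roots.Finite
  simple_mem : ∀ i, Pi.single i 1 ∈ roots
  zero_not_mem : (0 : FinLat n) ∉ roots
  neg_mem : ∀ a ∈ roots, -a ∈ roots
  /-- the coroot `α∨` of a root `α`, in simple-coroot coordinates -/
  coroot : FinLat n → FinLat n
  coroot_simple : ∀ i, coroot (Pi.single i 1) = Pi.single i 1
  coroot_neg : ∀ a, coroot (-a) = -(coroot a)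
  /-- the root string / reflection closure property -/
  refl_mem : ∀ a ∈ roots, ∀ b ∈ roots, b - fpair cartan b (coroot a) • a ∈ roots
  /-- the highest root `θ` -/
  theta : FinLat n
  theta_mem : theta ∈ roots
  theta_highest : ∀ a ∈ roots, a ≤ theta

namespace FiniteRootData

variable {n : ℕ} (F : FiniteRootData n)

/-- A vector of the root lattice as a linear polynomial in
`Sym(h*_ℚ) = ℚ[α_1, …, α_n]` (the variable `X j` is the simple root `α_j`). -/
noncomputable def lin (a : FinLat n) : MvPolynomial (Fin n) ℚ :=
  ∑ j, (a j : ℚ) • MvPolynomial.X j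

/-- The reflection `s_α` of a root `α`, acting on `Sym(h*_ℚ)` as the algebra
automorphism induced by `α_j ↦ α_j - ⟨α_j, α∨⟩ α`. -/
noncomputable def sAct (a : FinLat n) :
    MvPolynomial (Fin n) ℚ →ₐ[ℚ] MvPolynomial (Fin n) ℚ :=
  MvPolynomial.aeval (fun j =>
    MvPolynomial.X j - (fpair F.cartan (Pi.single j 1) (F.coroot a) : ℚ) • lin a)

end FiniteRootData

open MvPolynomial FiniteRootData


variable {n : ℕ}

/-- pairing of a lattice vector against a coroot functional -/
def pairZ (p : Fin n → ℤ) (v : FinLat n) : ℤ := ∑ j, v j * p j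

lemma pairZ_zero (p : Fin n → ℤ) : pairZ p 0 = 0 := by simp [pairZ]

lemma pairZ_add (p : Fin n → ℤ) (u v : FinLat n) : pairZ p (u + v) = pairZ p u + pairZ p v := by
  simp [pairZ, add_mul, Finset.sum_add_distrib]

lemma pairZ_sub (p : Fin n → ℤ) (u v : FinLat n) : pairZ p (u - v) = pairZ p u - pairZ p v := by
  simp [pairZ, sub_mul, Finset.sum_sub_distrib]

lemma pairZ_smul (p : Fin n → ℤ) (k : ℤ) (v : FinLat n) : pairZ p (k • v) = k * pairZ p v := by
  simp [pairZ, Finset.mul_sum, mul_assoc]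

lemma pairZ_single (p : Fin n → ℤ) (i : Fin n) : pairZ p (Pi.single i 1) = p i := by
  simp [pairZ, Pi.single_apply, Finset.sum_ite_eq']

lemma pairZ_neg (p : Fin n → ℤ) (v : FinLat n) : pairZ p (-v) = - pairZ p v := by
  simp [pairZ, Finset.sum_neg_distrib]

lemma lin_add (u v : FinLat n) : lin (u + v) = lin u + lin v := by
  simp only [lin, Pi.add_apply, Int.cast_add, add_smul, Finset.sum_add_distrib]

lemma lin_neg (v : FinLat n) : lin (-v) = - lin v := by
  simp [lin]

lemma lin_sub (u v : FinLat n) : lin (u - v) = lin u - lin v := by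
  simp only [lin, Pi.sub_apply, Int.cast_sub, sub_smul, Finset.sum_sub_distrib]

lemma lin_zsmul (k : ℤ) (v : FinLat n) : lin (k • v) = (k : MvPolynomial (Fin n) ℚ) * lin v := by
  simp only [lin, Finset.mul_sum, Pi.smul_apply, smul_eq_mul, Int.cast_mul]
  refine Finset.sum_congr rfl fun j _ => ?_
  rw [mul_smul, MvPolynomial.smul_eq_C_mul (((v j):ℚ) • X j), show ((k:ℚ)) = (((k:ℤ) : ℚ)) from rfl,
    map_intCast]

lemma lin_single (i : Fin n) : lin (Pi.single i (1:ℤ)) = X (R := ℚ) i := by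
  simp only [lin, Pi.single_apply]
  rw [Finset.sum_eq_single i] <;> simp +contextual

lemma eval_lin (x : Fin n → ℚ) (v : FinLat n) : eval x (lin v) = ∑ j, (v j : ℚ) * x j := by
  simp [lin, smul_eq_mul]

lemma lin_eq_zero {v : FinLat n} (h : lin v = 0) : v = 0 := by
  funext j
  have := congrArg (eval (Pi.single j (1:ℚ))) h
  rw [eval_lin] at this
  simp only [map_zero] at this
  rw [Finset.sum_eq_single j] at this
  · simp only [Pi.single_eq_same, mul_one] at this
    exact_mod_cast this
  · intro b _ hb; simp [Pi.single_apply, hb]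
  · simp

lemma lin_ne_zero {v : FinLat n} (h : v ≠ 0) : lin v ≠ 0 := fun hh => h (lin_eq_zero hh)

lemma ne_zero_of_pairZ {p : Fin n → ℤ} {v : FinLat n} (h : pairZ p v ≠ 0) : v ≠ 0 := by
  rintro rfl; exact h (pairZ_zero p)

lemma zsmul_cast (k : ℤ) (f : MvPolynomial (Fin n) ℚ) :
    (k:ℚ) • f = (k : MvPolynomial (Fin n) ℚ) * f := by
  rw [MvPolynomial.smul_eq_C_mul, show ((k:ℚ)) = (((k:ℤ) : ℚ)) from rfl, map_intCast]

/-- The reflection with root `β` and coroot functional `p`, as an algebra map. -/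
noncomputable def sA (β : FinLat n) (p : Fin n → ℤ) :
    MvPolynomial (Fin n) ℚ →ₐ[ℚ] MvPolynomial (Fin n) ℚ :=
  aeval (fun j => X j - (p j : ℚ) • lin β)

lemma sA_lin (β : FinLat n) (p : Fin n → ℤ) (v : FinLat n) :
    sA β p (lin v) = lin (v - pairZ p v • β) := by
  rw [lin_sub, lin_zsmul, ← zsmul_cast]
  unfold sA lin
  rw [map_sum]
  simp only [map_smul, aeval_X]
  simp only [smul_sub, Finset.sum_sub_distrib]
  congr 1
  simp only [smul_smul]
  rw [← Finset.sum_smul]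
  congr 1
  push_cast [pairZ]
  ring

lemma sA_sA {β : FinLat n} {p : Fin n → ℤ} (hββ : pairZ p β = 2) (f : MvPolynomial (Fin n) ℚ) :
    sA β p (sA β p f) = f := by
  have : (sA β p).comp (sA β p) = AlgHom.id ℚ _ := by
    apply algHom_ext
    intro j
    simp only [AlgHom.comp_apply, AlgHom.id_apply]
    rw [← lin_single, sA_lin, sA_lin]
    congr 1
    rw [pairZ_sub, pairZ_smul, hββ]
    have : pairZ p (Pi.single j 1) - pairZ p (Pi.single j 1) * 2 = -(pairZ p (Pi.single j 1)) := by ring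
    rw [this, neg_smul, sub_neg_eq_add, sub_add_cancel]
  exact congrArg (fun g => g f) (congrArg DFunLike.coe this)

lemma sA_inj {β : FinLat n} {p : Fin n → ℤ} (hββ : pairZ p β = 2) :
    Function.Injective (sA β p) :=
  Function.LeftInverse.injective (g := sA β p) (sA_sA hββ)

noncomputable abbrev KK (n : ℕ) := FractionRing (MvPolynomial (Fin n) ℚ)

noncomputable def iK : MvPolynomial (Fin n) ℚ →+* KK n :=
  algebraMap (MvPolynomial (Fin n) ℚ) (KK n)

lemma iK_inj : Function.Injective (iK (n := n)) :=
  IsFractionRing.injective (MvPolynomial (Fin n) ℚ) (KK n)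

/-- The reflection extended to the fraction field. -/
noncomputable def SK (β : FinLat n) (p : Fin n → ℤ) (hββ : pairZ p β = 2) : KK n →+* KK n :=
  IsFractionRing.lift (g := (iK (n := n)).comp (sA β p).toRingHom)
    (iK_inj.comp (sA_inj hββ))

lemma SK_iK {β : FinLat n} {p : Fin n → ℤ} (hββ : pairZ p β = 2) (f : MvPolynomial (Fin n) ℚ) :
    SK β p hββ (iK f) = iK (sA β p f) :=
  IsFractionRing.lift_algebraMap _ f

lemma SK_SK {β : FinLat n} {p : Fin n → ℤ} (hββ : pairZ p β = 2) (x : KK n) :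
    SK β p hββ (SK β p hββ x) = x := by
  have : (SK β p hββ).comp (SK β p hββ) = RingHom.id (KK n) := by
    refine IsLocalization.ringHom_ext (nonZeroDivisors (MvPolynomial (Fin n) ℚ))
      (RingHom.ext fun f => ?_)
    simp only [RingHom.comp_apply, RingHom.id_apply]
    rw [show (algebraMap (MvPolynomial (Fin n) ℚ) (KK n)) f = iK f from rfl,
      SK_iK, SK_iK, sA_sA hββ]
  exact congrArg (fun g => g x) (congrArg DFunLike.coe this)

lemma iK_lin_ne_zero {β : FinLat n} (h : β ≠ 0) : iK (lin β) ≠ 0 := by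
  intro hh
  exact lin_ne_zero h (iK_inj (by rw [hh, map_zero]))

noncomputable def Edd {K : Type*} [Field K] (S : K →+* K) (B : K) : K → K := fun x => (x - S x)/B

lemma End_to_Edd {β : FinLat n} {p : Fin n → ℤ} (hββ : pairZ p β = 2)
    (dd : Module.End ℚ (MvPolynomial (Fin n) ℚ))
    (hd : ∀ f, lin β * dd f = f - sA β p f) (f : MvPolynomial (Fin n) ℚ) :
    iK (dd f) = Edd (SK β p hββ) (iK (lin β)) (iK f) := by
  have hβ : β ≠ 0 := ne_zero_of_pairZ (p := p) (by rw [hββ]; norm_num)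
  have hB : iK (lin β) ≠ 0 := iK_lin_ne_zero hβ
  rw [Edd, eq_div_iff hB, SK_iK, ← map_sub, ← hd f, map_mul]
  ring

/-- reflection on the lattice level -/
def refV (β : FinLat n) (p : Fin n → ℤ) (v : FinLat n) : FinLat n := v - pairZ p v • β

lemma sA_lin' (β : FinLat n) (p : Fin n → ℤ) (v : FinLat n) :
    sA β p (lin v) = lin (refV β p v) := sA_lin β p v

section pair

variable (β γ : FinLat n) (pb pc : Fin n → ℤ)

lemma vword2 (hbc : pairZ pc β = 0) (hcb : pairZ pb γ = 0) (v : FinLat n) :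
    refV β pb (refV γ pc v) = refV γ pc (refV β pb v) := by
  simp only [refV, pairZ_sub, pairZ_smul, hbc, hcb]
  funext j
  simp only [Pi.sub_apply, Pi.smul_apply, smul_eq_mul]
  ring

lemma vword3 (hββ : pairZ pb β = 2) (hγγ : pairZ pc γ = 2)
    (hbc : pairZ pc β = -1) (hcb : pairZ pb γ = -1) (v : FinLat n) :
    refV β pb (refV γ pc (refV β pb v)) = refV γ pc (refV β pb (refV γ pc v)) := by
  simp only [refV, pairZ_sub, pairZ_smul, hbc, hcb, hββ, hγγ]
  funext j
  simp only [Pi.sub_apply, Pi.smul_apply, smul_eq_mul]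
  ring

lemma vword4 (hββ : pairZ pb β = 2) (hγγ : pairZ pc γ = 2)
    (hbc : pairZ pc β = -1) (hcb : pairZ pb γ = -2) (v : FinLat n) :
    refV β pb (refV γ pc (refV β pb (refV γ pc v)))
      = refV γ pc (refV β pb (refV γ pc (refV β pb v))) := by
  simp only [refV, pairZ_sub, pairZ_smul, hbc, hcb, hββ, hγγ]
  funext j
  simp only [Pi.sub_apply, Pi.smul_apply, smul_eq_mul]
  ring

lemma vword6 (hββ : pairZ pb β = 2) (hγγ : pairZ pc γ = 2)
    (hbc : pairZ pc β = -1) (hcb : pairZ pb γ = -3) (v : FinLat n) :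
    refV β pb (refV γ pc (refV β pb (refV γ pc (refV β pb (refV γ pc v)))))
      = refV γ pc (refV β pb (refV γ pc (refV β pb (refV γ pc (refV β pb v))))) := by
  simp only [refV, pairZ_sub, pairZ_smul, hbc, hcb, hββ, hγγ]
  funext j
  simp only [Pi.sub_apply, Pi.smul_apply, smul_eq_mul]
  ring

end pair

section pairK

variable {β γ : FinLat n} {pb pc : Fin n → ℤ}
  (hββ : pairZ pb β = 2) (hγγ : pairZ pc γ = 2)

lemma pword (hv : ∀ v, refV β pb (refV γ pc (refV β pb v)) = refV γ pc (refV β pb (refV γ pc v)))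
    (f : MvPolynomial (Fin n) ℚ) :
    sA β pb (sA γ pc (sA β pb f)) = sA γ pc (sA β pb (sA γ pc f)) := by
  have : (sA β pb).comp ((sA γ pc).comp (sA β pb))
      = (sA γ pc).comp ((sA β pb).comp (sA γ pc)) := by
    apply algHom_ext
    intro j
    simp only [AlgHom.comp_apply]
    rw [← lin_single, sA_lin', sA_lin', sA_lin', sA_lin', sA_lin', sA_lin']
    exact congrArg lin (hv _)
  exact congrArg (fun g => g f) (congrArg DFunLike.coe this)

lemma kword (hp : ∀ f, sA β pb (sA γ pc (sA β pb f)) = sA γ pc (sA β pb (sA γ pc f)))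
    (x : KK n) :
    SK β pb hββ (SK γ pc hγγ (SK β pb hββ x))
      = SK γ pc hγγ (SK β pb hββ (SK γ pc hγγ x)) := by
  have : (SK β pb hββ).comp ((SK γ pc hγγ).comp (SK β pb hββ))
      = (SK γ pc hγγ).comp ((SK β pb hββ).comp (SK γ pc hγγ)) := by
    refine IsLocalization.ringHom_ext (nonZeroDivisors (MvPolynomial (Fin n) ℚ))
      (RingHom.ext fun f => ?_)
    simp only [RingHom.comp_apply]
    rw [show (algebraMap (MvPolynomial (Fin n) ℚ) (KK n)) f = iK f from rfl,
      SK_iK, SK_iK, SK_iK, SK_iK, SK_iK, SK_iK]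
    exact congrArg iK (hp f)
  exact congrArg (fun g => g x) (congrArg DFunLike.coe this)

-- longer words, same pattern
lemma pword4 (hv : ∀ v, refV β pb (refV γ pc (refV β pb (refV γ pc v)))
      = refV γ pc (refV β pb (refV γ pc (refV β pb v))))
    (f : MvPolynomial (Fin n) ℚ) :
    sA β pb (sA γ pc (sA β pb (sA γ pc f))) = sA γ pc (sA β pb (sA γ pc (sA β pb f))) := by
  have : (sA β pb).comp ((sA γ pc).comp ((sA β pb).comp (sA γ pc)))
      = (sA γ pc).comp ((sA β pb).comp ((sA γ pc).comp (sA β pb))) := by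
    apply algHom_ext
    intro j
    simp only [AlgHom.comp_apply]
    rw [← lin_single, sA_lin', sA_lin', sA_lin', sA_lin', sA_lin', sA_lin', sA_lin', sA_lin']
    exact congrArg lin (hv _)
  exact congrArg (fun g => g f) (congrArg DFunLike.coe this)

lemma kword4 (hp : ∀ f, sA β pb (sA γ pc (sA β pb (sA γ pc f)))
      = sA γ pc (sA β pb (sA γ pc (sA β pb f))))
    (x : KK n) :
    SK β pb hββ (SK γ pc hγγ (SK β pb hββ (SK γ pc hγγ x)))
      = SK γ pc hγγ (SK β pb hββ (SK γ pc hγγ (SK β pb hββ x))) := by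
  have : (SK β pb hββ).comp ((SK γ pc hγγ).comp ((SK β pb hββ).comp (SK γ pc hγγ)))
      = (SK γ pc hγγ).comp ((SK β pb hββ).comp ((SK γ pc hγγ).comp (SK β pb hββ))) := by
    refine IsLocalization.ringHom_ext (nonZeroDivisors (MvPolynomial (Fin n) ℚ))
      (RingHom.ext fun f => ?_)
    simp only [RingHom.comp_apply]
    rw [show (algebraMap (MvPolynomial (Fin n) ℚ) (KK n)) f = iK f from rfl,
      SK_iK, SK_iK, SK_iK, SK_iK, SK_iK, SK_iK, SK_iK, SK_iK]
    exact congrArg iK (hp f)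
  exact congrArg (fun g => g x) (congrArg DFunLike.coe this)

lemma pword6 (hv : ∀ v, refV β pb (refV γ pc (refV β pb (refV γ pc (refV β pb (refV γ pc v)))))
      = refV γ pc (refV β pb (refV γ pc (refV β pb (refV γ pc (refV β pb v))))))
    (f : MvPolynomial (Fin n) ℚ) :
    sA β pb (sA γ pc (sA β pb (sA γ pc (sA β pb (sA γ pc f)))))
      = sA γ pc (sA β pb (sA γ pc (sA β pb (sA γ pc (sA β pb f))))) := by
  have : (sA β pb).comp ((sA γ pc).comp ((sA β pb).comp ((sA γ pc).comp ((sA β pb).comp (sA γ pc)))))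
      = (sA γ pc).comp ((sA β pb).comp ((sA γ pc).comp ((sA β pb).comp ((sA γ pc).comp (sA β pb))))) := by
    apply algHom_ext
    intro j
    simp only [AlgHom.comp_apply]
    rw [← lin_single, sA_lin', sA_lin', sA_lin', sA_lin', sA_lin', sA_lin', sA_lin', sA_lin',
      sA_lin', sA_lin', sA_lin', sA_lin']
    exact congrArg lin (hv _)
  exact congrArg (fun g => g f) (congrArg DFunLike.coe this)

lemma kword6 (hp : ∀ f, sA β pb (sA γ pc (sA β pb (sA γ pc (sA β pb (sA γ pc f)))))
      = sA γ pc (sA β pb (sA γ pc (sA β pb (sA γ pc (sA β pb f))))))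
    (x : KK n) :
    SK β pb hββ (SK γ pc hγγ (SK β pb hββ (SK γ pc hγγ (SK β pb hββ (SK γ pc hγγ x)))))
      = SK γ pc hγγ (SK β pb hββ (SK γ pc hγγ (SK β pb hββ (SK γ pc hγγ (SK β pb hββ x))))) := by
  have : (SK β pb hββ).comp ((SK γ pc hγγ).comp ((SK β pb hββ).comp ((SK γ pc hγγ).comp
          ((SK β pb hββ).comp (SK γ pc hγγ)))))
      = (SK γ pc hγγ).comp ((SK β pb hββ).comp ((SK γ pc hγγ).comp ((SK β pb hββ).comp
          ((SK γ pc hγγ).comp (SK β pb hββ))))) := by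
    refine IsLocalization.ringHom_ext (nonZeroDivisors (MvPolynomial (Fin n) ℚ))
      (RingHom.ext fun f => ?_)
    simp only [RingHom.comp_apply]
    rw [show (algebraMap (MvPolynomial (Fin n) ℚ) (KK n)) f = iK f from rfl,
      SK_iK, SK_iK, SK_iK, SK_iK, SK_iK, SK_iK, SK_iK, SK_iK, SK_iK, SK_iK, SK_iK, SK_iK]
    exact congrArg iK (hp f)
  exact congrArg (fun g => g x) (congrArg DFunLike.coe this)

lemma kword2 (hp : ∀ f, sA β pb (sA γ pc f) = sA γ pc (sA β pb f)) (x : KK n) :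
    SK β pb hββ (SK γ pc hγγ x) = SK γ pc hγγ (SK β pb hββ x) := by
  have : (SK β pb hββ).comp (SK γ pc hγγ) = (SK γ pc hγγ).comp (SK β pb hββ) := by
    refine IsLocalization.ringHom_ext (nonZeroDivisors (MvPolynomial (Fin n) ℚ))
      (RingHom.ext fun f => ?_)
    simp only [RingHom.comp_apply]
    rw [show (algebraMap (MvPolynomial (Fin n) ℚ) (KK n)) f = iK f from rfl,
      SK_iK, SK_iK, SK_iK, SK_iK]
    exact congrArg iK (hp f)
  exact congrArg (fun g => g x) (congrArg DFunLike.coe this)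

lemma pword2 (hv : ∀ v, refV β pb (refV γ pc v) = refV γ pc (refV β pb v))
    (f : MvPolynomial (Fin n) ℚ) :
    sA β pb (sA γ pc f) = sA γ pc (sA β pb f) := by
  have : (sA β pb).comp (sA γ pc) = (sA γ pc).comp (sA β pb) := by
    apply algHom_ext
    intro j
    simp only [AlgHom.comp_apply]
    rw [← lin_single, sA_lin', sA_lin', sA_lin', sA_lin']
    exact congrArg lin (hv _)
  exact congrArg (fun g => g f) (congrArg DFunLike.coe this)

lemma SK_lin (v : FinLat n) :
    SK β pb hββ (iK (lin v)) = iK (lin v) - ((pairZ pb v : ℤ) : KK n) * iK (lin β) := by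
  rw [SK_iK, sA_lin, lin_sub, lin_zsmul, map_sub, map_mul, map_intCast]

lemma comb_iK (r s : ℤ) :
    (r : KK n) * iK (lin β) + (s : KK n) * iK (lin γ) = iK (lin (r • β + s • γ)) := by
  rw [lin_add, lin_zsmul, lin_zsmul, map_add, map_mul, map_mul, map_intCast, map_intCast]

include hββ hγγ in
lemma comb_ne (r s : ℤ)
    (h : 2*r + s*(pairZ pb γ) ≠ 0 ∨ r*(pairZ pc β) + 2*s ≠ 0) :
    (r : KK n) * iK (lin β) + (s : KK n) * iK (lin γ) ≠ 0 := by
  rw [comb_iK]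
  apply iK_lin_ne_zero
  intro hz
  rcases h with h | h
  · apply h
    have := congrArg (pairZ pb) hz
    rw [pairZ_add, pairZ_smul, pairZ_smul, pairZ_zero, hββ] at this
    linarith
  · apply h
    have := congrArg (pairZ pc) hz
    rw [pairZ_add, pairZ_smul, pairZ_smul, pairZ_zero, hγγ] at this
    linarith

end pairK

lemma Edd_step {K : Type*} [Field K] (S : K →+* K) (R Pi y N N' : K) (hR : R ≠ 0)
    (hSPi : S Pi = -Pi) (hy : Pi * y = N) (hSN : S N = R * N' - N) :
    Pi * Edd S R y = N' := by
  have h2 : Pi * S y = -(S N) := by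
    have h3 := congrArg S hy
    rw [map_mul, hSPi] at h3
    linear_combination -h3
  calc Pi * Edd S R y = (Pi * y - Pi * S y)/R := by rw [Edd]; ring
    _ = (R * N')/R := by rw [hy, h2, hSN]; ring_nf
    _ = N' := mul_div_cancel_left₀ N' hR

set_option maxHeartbeats 2000000 in
lemma braid3 {K : Type*} [Field K] (Sb Sc : K →+* K) (B C : K)
    (hnz0 : B ≠ 0) (hnz1 : C ≠ 0) (hnz2 : B + C ≠ 0)
    (hbB : Sb B = -B) (hcC : Sc C = -C) (hbC : Sb C = C + 1*B) (hcB : Sc B = B + C)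
    (hbb : ∀ x, Sb (Sb x) = x) (hcc : ∀ x, Sc (Sc x) = x)
    (hw : ∀ x, Sb (Sc (Sb (x))) = Sc (Sb (Sc (x)))) (x : K) :
    Edd Sb B (Edd Sc C (Edd Sb B (x))) = Edd Sc C (Edd Sb B (Edd Sc C (x))) := by
  have hPin : (B*C*(B+C) : K) ≠ 0 := mul_ne_zero (mul_ne_zero (hnz0) hnz1) hnz2
  have hbPi : Sb (B*C*(B+C)) = -(B*C*(B+C)) := by simp only [map_mul, map_add, map_ofNat, hbB, hbC]; ring
  have hcPi : Sc (B*C*(B+C)) = -(B*C*(B+C)) := by simp only [map_mul, map_add, map_ofNat, hcC, hcB]; ring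
  have h0 : (B*C*(B+C)) * x = (B*C*(B+C)) * x := rfl
  have hL1 : (B*C*(B+C)) * (Edd Sb B x) = (-C^2*Sb (x) + C^2*x - B*C*Sb (x) + B*C*x) :=
    Edd_step Sb B (B*C*(B+C)) _ _ _ hnz0 hbPi h0
      (by simp only [map_add, map_sub, map_mul, map_neg, map_pow, map_ofNat, hbB, hbC, hbb, hw]; ring)
  have hL2 : (B*C*(B+C)) * (Edd Sc C (Edd Sb B x)) = (-C*Sb (x) + C*x + B*Sc (Sb (x)) - B*Sc (x) - B*Sb (x) + B*x) :=
    Edd_step Sc C (B*C*(B+C)) _ _ _ hnz1 hcPi hL1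
      (by simp only [map_add, map_sub, map_mul, map_neg, map_pow, map_ofNat, hcC, hcB, hcc, hw]; ring)
  have hL3 : (B*C*(B+C)) * (Edd Sb B (Edd Sc C (Edd Sb B x))) = (-Sc (Sb (Sc (x))) + Sc (Sb (x)) + Sb (Sc (x)) - Sc (x) - Sb (x) + x) :=
    Edd_step Sb B (B*C*(B+C)) _ _ _ hnz0 hbPi hL2
      (by simp only [map_add, map_sub, map_mul, map_neg, map_pow, map_ofNat, hbB, hbC, hbb, hw]; ring)
  have hR1 : (B*C*(B+C)) * (Edd Sc C x) = (-B*C*Sc (x) + B*C*x - B^2*Sc (x) + B^2*x) :=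
    Edd_step Sc C (B*C*(B+C)) _ _ _ hnz1 hcPi h0
      (by simp only [map_add, map_sub, map_mul, map_neg, map_pow, map_ofNat, hcC, hcB, hcc, hw]; ring)
  have hR2 : (B*C*(B+C)) * (Edd Sb B (Edd Sc C x)) = (C*Sb (Sc (x)) - C*Sc (x) - C*Sb (x) + C*x - B*Sc (x) + B*x) :=
    Edd_step Sb B (B*C*(B+C)) _ _ _ hnz0 hbPi hR1
      (by simp only [map_add, map_sub, map_mul, map_neg, map_pow, map_ofNat, hbB, hbC, hbb, hw]; ring)
  have hR3 : (B*C*(B+C)) * (Edd Sc C (Edd Sb B (Edd Sc C x))) = (-Sc (Sb (Sc (x))) + Sc (Sb (x)) + Sb (Sc (x)) - Sc (x) - Sb (x) + x) :=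
    Edd_step Sc C (B*C*(B+C)) _ _ _ hnz1 hcPi hR2
      (by simp only [map_add, map_sub, map_mul, map_neg, map_pow, map_ofNat, hcC, hcB, hcc, hw]; ring)
  exact mul_left_cancel₀ hPin (hL3.trans hR3.symm)

set_option maxHeartbeats 2000000 in
lemma braid4 {K : Type*} [Field K] (Sb Sc : K →+* K) (B C : K)
    (hnz0 : B ≠ 0) (hnz1 : C ≠ 0) (hnz2 : B + C ≠ 0) (hnz3 : 2*B + C ≠ 0)
    (hbB : Sb B = -B) (hcC : Sc C = -C) (hbC : Sb C = C + 2*B) (hcB : Sc B = B + C)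
    (hbb : ∀ x, Sb (Sb x) = x) (hcc : ∀ x, Sc (Sc x) = x)
    (hw : ∀ x, Sb (Sc (Sb (Sc (x)))) = Sc (Sb (Sc (Sb (x))))) (x : K) :
    Edd Sb B (Edd Sc C (Edd Sb B (Edd Sc C (x)))) = Edd Sc C (Edd Sb B (Edd Sc C (Edd Sb B (x)))) := by
  have hPin : (B*C*(B+C)*(2*B+C) : K) ≠ 0 := mul_ne_zero (mul_ne_zero (mul_ne_zero (hnz0) hnz1) hnz2) hnz3
  have hbPi : Sb (B*C*(B+C)*(2*B+C)) = -(B*C*(B+C)*(2*B+C)) := by simp only [map_mul, map_add, map_ofNat, hbB, hbC]; ring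
  have hcPi : Sc (B*C*(B+C)*(2*B+C)) = -(B*C*(B+C)*(2*B+C)) := by simp only [map_mul, map_add, map_ofNat, hcC, hcB]; ring
  have h0 : (B*C*(B+C)*(2*B+C)) * x = (B*C*(B+C)*(2*B+C)) * x := rfl
  have hL1 : (B*C*(B+C)*(2*B+C)) * (Edd Sc C x) = (-B*C^2*Sc (x) + B*C^2*x + (-3)*B^2*C*Sc (x) + (3)*B^2*C*x + (-2)*B^3*Sc (x) + (2)*B^3*x) :=
    Edd_step Sc C (B*C*(B+C)*(2*B+C)) _ _ _ hnz1 hcPi h0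
      (by simp only [map_add, map_sub, map_mul, map_neg, map_pow, map_ofNat, hcC, hcB, hcc, hw]; ring)
  have hL2 : (B*C*(B+C)*(2*B+C)) * (Edd Sb B (Edd Sc C x)) = (C^2*Sb (Sc (x)) - C^2*Sc (x) - C^2*Sb (x) + C^2*x + B*C*Sb (Sc (x)) + (-3)*B*C*Sc (x) - B*C*Sb (x) + (3)*B*C*x + (-2)*B^2*Sc (x) + (2)*B^2*x) :=
    Edd_step Sb B (B*C*(B+C)*(2*B+C)) _ _ _ hnz0 hbPi hL1
      (by simp only [map_add, map_sub, map_mul, map_neg, map_pow, map_ofNat, hbB, hbC, hbb, hw]; ring)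
  have hL3 : (B*C*(B+C)*(2*B+C)) * (Edd Sc C (Edd Sb B (Edd Sc C x))) = (C*Sb (Sc (x)) - C*Sc (x) - C*Sb (x) + C*x - B*Sc (Sb (Sc (x))) + B*Sc (Sb (x)) + B*Sb (Sc (x)) + (-2)*B*Sc (x) - B*Sb (x) + (2)*B*x) :=
    Edd_step Sc C (B*C*(B+C)*(2*B+C)) _ _ _ hnz1 hcPi hL2
      (by simp only [map_add, map_sub, map_mul, map_neg, map_pow, map_ofNat, hcC, hcB, hcc, hw]; ring)
  have hL4 : (B*C*(B+C)*(2*B+C)) * (Edd Sb B (Edd Sc C (Edd Sb B (Edd Sc C x)))) = (Sc (Sb (Sc (Sb (x)))) - Sc (Sb (Sc (x))) - Sb (Sc (Sb (x))) + Sc (Sb (x)) + Sb (Sc (x)) - Sc (x) - Sb (x) + x) :=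
    Edd_step Sb B (B*C*(B+C)*(2*B+C)) _ _ _ hnz0 hbPi hL3
      (by simp only [map_add, map_sub, map_mul, map_neg, map_pow, map_ofNat, hbB, hbC, hbb, hw]; ring)
  have hR1 : (B*C*(B+C)*(2*B+C)) * (Edd Sb B x) = (-C^3*Sb (x) + C^3*x + (-3)*B*C^2*Sb (x) + (3)*B*C^2*x + (-2)*B^2*C*Sb (x) + (2)*B^2*C*x) :=
    Edd_step Sb B (B*C*(B+C)*(2*B+C)) _ _ _ hnz0 hbPi h0
      (by simp only [map_add, map_sub, map_mul, map_neg, map_pow, map_ofNat, hbB, hbC, hbb, hw]; ring)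
  have hR2 : (B*C*(B+C)*(2*B+C)) * (Edd Sc C (Edd Sb B x)) = (-C^2*Sb (x) + C^2*x + B*C*Sc (Sb (x)) - B*C*Sc (x) + (-3)*B*C*Sb (x) + (3)*B*C*x + (2)*B^2*Sc (Sb (x)) + (-2)*B^2*Sc (x) + (-2)*B^2*Sb (x) + (2)*B^2*x) :=
    Edd_step Sc C (B*C*(B+C)*(2*B+C)) _ _ _ hnz1 hcPi hR1
      (by simp only [map_add, map_sub, map_mul, map_neg, map_pow, map_ofNat, hcC, hcB, hcc, hw]; ring)
  have hR3 : (B*C*(B+C)*(2*B+C)) * (Edd Sb B (Edd Sc C (Edd Sb B x))) = (-C*Sb (Sc (Sb (x))) + C*Sc (Sb (x)) + C*Sb (Sc (x)) - C*Sc (x) + (-2)*C*Sb (x) + (2)*C*x + (2)*B*Sc (Sb (x)) + (-2)*B*Sc (x) + (-2)*B*Sb (x) + (2)*B*x) :=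
    Edd_step Sb B (B*C*(B+C)*(2*B+C)) _ _ _ hnz0 hbPi hR2
      (by simp only [map_add, map_sub, map_mul, map_neg, map_pow, map_ofNat, hbB, hbC, hbb, hw]; ring)
  have hR4 : (B*C*(B+C)*(2*B+C)) * (Edd Sc C (Edd Sb B (Edd Sc C (Edd Sb B x)))) = (Sc (Sb (Sc (Sb (x)))) - Sc (Sb (Sc (x))) - Sb (Sc (Sb (x))) + Sc (Sb (x)) + Sb (Sc (x)) - Sc (x) - Sb (x) + x) :=
    Edd_step Sc C (B*C*(B+C)*(2*B+C)) _ _ _ hnz1 hcPi hR3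
      (by simp only [map_add, map_sub, map_mul, map_neg, map_pow, map_ofNat, hcC, hcB, hcc, hw]; ring)
  exact mul_left_cancel₀ hPin (hL4.trans hR4.symm)

set_option maxHeartbeats 2000000 in
lemma braid6 {K : Type*} [Field K] (Sb Sc : K →+* K) (B C : K)
    (hnz0 : B ≠ 0) (hnz1 : C ≠ 0) (hnz2 : B + C ≠ 0) (hnz3 : 2*B + C ≠ 0) (hnz4 : 3*B + C ≠ 0) (hnz5 : 3*B + 2*C ≠ 0)
    (hbB : Sb B = -B) (hcC : Sc C = -C) (hbC : Sb C = C + 3*B) (hcB : Sc B = B + C)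
    (hbb : ∀ x, Sb (Sb x) = x) (hcc : ∀ x, Sc (Sc x) = x)
    (hw : ∀ x, Sb (Sc (Sb (Sc (Sb (Sc (x)))))) = Sc (Sb (Sc (Sb (Sc (Sb (x))))))) (x : K) :
    Edd Sb B (Edd Sc C (Edd Sb B (Edd Sc C (Edd Sb B (Edd Sc C (x)))))) = Edd Sc C (Edd Sb B (Edd Sc C (Edd Sb B (Edd Sc C (Edd Sb B (x)))))) := by
  have hPin : (B*C*(B+C)*(2*B+C)*(3*B+C)*(3*B+2*C) : K) ≠ 0 := mul_ne_zero (mul_ne_zero (mul_ne_zero (mul_ne_zero (mul_ne_zero (hnz0) hnz1) hnz2) hnz3) hnz4) hnz5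
  have hbPi : Sb (B*C*(B+C)*(2*B+C)*(3*B+C)*(3*B+2*C)) = -(B*C*(B+C)*(2*B+C)*(3*B+C)*(3*B+2*C)) := by simp only [map_mul, map_add, map_ofNat, hbB, hbC]; ring
  have hcPi : Sc (B*C*(B+C)*(2*B+C)*(3*B+C)*(3*B+2*C)) = -(B*C*(B+C)*(2*B+C)*(3*B+C)*(3*B+2*C)) := by simp only [map_mul, map_add, map_ofNat, hcC, hcB]; ring
  have h0 : (B*C*(B+C)*(2*B+C)*(3*B+C)*(3*B+2*C)) * x = (B*C*(B+C)*(2*B+C)*(3*B+C)*(3*B+2*C)) * x := rfl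
  have hL1 : (B*C*(B+C)*(2*B+C)*(3*B+C)*(3*B+2*C)) * (Edd Sc C x) = ((-2)*B*C^4*Sc (x) + (2)*B*C^4*x + (-15)*B^2*C^3*Sc (x) + (15)*B^2*C^3*x + (-40)*B^3*C^2*Sc (x) + (40)*B^3*C^2*x + (-45)*B^4*C*Sc (x) + (45)*B^4*C*x + (-18)*B^5*Sc (x) + (18)*B^5*x) :=
    Edd_step Sc C (B*C*(B+C)*(2*B+C)*(3*B+C)*(3*B+2*C)) _ _ _ hnz1 hcPi h0
      (by simp only [map_add, map_sub, map_mul, map_neg, map_pow, map_ofNat, hcC, hcB, hcc, hw]; ring)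
  have hL2 : (B*C*(B+C)*(2*B+C)*(3*B+C)*(3*B+2*C)) * (Edd Sb B (Edd Sc C x)) = ((2)*C^4*Sb (Sc (x)) + (-2)*C^4*Sc (x) + (-2)*C^4*Sb (x) + (2)*C^4*x + (9)*B*C^3*Sb (Sc (x)) + (-15)*B*C^3*Sc (x) + (-9)*B*C^3*Sb (x) + (15)*B*C^3*x + (13)*B^2*C^2*Sb (Sc (x)) + (-40)*B^2*C^2*Sc (x) + (-13)*B^2*C^2*Sb (x) + (40)*B^2*C^2*x + (6)*B^3*C*Sb (Sc (x)) + (-45)*B^3*C*Sc (x) + (-6)*B^3*C*Sb (x) + (45)*B^3*C*x + (-18)*B^4*Sc (x) + (18)*B^4*x) :=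
    Edd_step Sb B (B*C*(B+C)*(2*B+C)*(3*B+C)*(3*B+2*C)) _ _ _ hnz0 hbPi hL1
      (by simp only [map_add, map_sub, map_mul, map_neg, map_pow, map_ofNat, hbB, hbC, hbb, hw]; ring)
  have hL3 : (B*C*(B+C)*(2*B+C)*(3*B+C)*(3*B+2*C)) * (Edd Sc C (Edd Sb B (Edd Sc C x))) = ((2)*C^3*Sb (Sc (x)) + (-2)*C^3*Sc (x) + (-2)*C^3*Sb (x) + (2)*C^3*x - B*C^2*Sc (Sb (Sc (x))) + B*C^2*Sc (Sb (x)) + (9)*B*C^2*Sb (Sc (x)) + (-13)*B*C^2*Sc (x) + (-9)*B*C^2*Sb (x) + (13)*B*C^2*x + (-5)*B^2*C*Sc (Sb (Sc (x))) + (5)*B^2*C*Sc (Sb (x)) + (13)*B^2*C*Sb (Sc (x)) + (-27)*B^2*C*Sc (x) + (-13)*B^2*C*Sb (x) + (27)*B^2*C*x + (-6)*B^3*Sc (Sb (Sc (x))) + (6)*B^3*Sc (Sb (x)) + (6)*B^3*Sb (Sc (x)) + (-18)*B^3*Sc (x) + (-6)*B^3*Sb (x) + (18)*B^3*x) :=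
    Edd_step Sc C (B*C*(B+C)*(2*B+C)*(3*B+C)*(3*B+2*C)) _ _ _ hnz1 hcPi hL2
      (by simp only [map_add, map_sub, map_mul, map_neg, map_pow, map_ofNat, hcC, hcB, hcc, hw]; ring)
  have hL4 : (B*C*(B+C)*(2*B+C)*(3*B+C)*(3*B+2*C)) * (Edd Sb B (Edd Sc C (Edd Sb B (Edd Sc C x)))) = (C^2*Sb (Sc (Sb (Sc (x)))) - C^2*Sc (Sb (Sc (x))) - C^2*Sb (Sc (Sb (x))) + C^2*Sc (Sb (x)) + (4)*C^2*Sb (Sc (x)) + (-4)*C^2*Sc (x) + (-4)*C^2*Sb (x) + (4)*C^2*x + B*C*Sb (Sc (Sb (Sc (x)))) + (-5)*B*C*Sc (Sb (Sc (x))) - B*C*Sb (Sc (Sb (x))) + (5)*B*C*Sc (Sb (x)) + (10)*B*C*Sb (Sc (x)) + (-14)*B*C*Sc (x) + (-10)*B*C*Sb (x) + (14)*B*C*x + (-6)*B^2*Sc (Sb (Sc (x))) + (6)*B^2*Sc (Sb (x)) + (6)*B^2*Sb (Sc (x)) + (-12)*B^2*Sc (x) + (-6)*B^2*Sb (x) +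 (12)*B^2*x) :=
    Edd_step Sb B (B*C*(B+C)*(2*B+C)*(3*B+C)*(3*B+2*C)) _ _ _ hnz0 hbPi hL3
      (by simp only [map_add, map_sub, map_mul, map_neg, map_pow, map_ofNat, hbB, hbC, hbb, hw]; ring)
  have hL5 : (B*C*(B+C)*(2*B+C)*(3*B+C)*(3*B+2*C)) * (Edd Sc C (Edd Sb B (Edd Sc C (Edd Sb B (Edd Sc C x))))) = (C*Sb (Sc (Sb (Sc (x)))) - C*Sc (Sb (Sc (x))) - C*Sb (Sc (Sb (x))) + C*Sc (Sb (x)) + (2)*C*Sb (Sc (x)) + (-2)*C*Sc (x) + (-2)*C*Sb (x) + (2)*C*x - B*Sc (Sb (Sc (Sb (Sc (x))))) + B*Sc (Sb (Sc (Sb (x)))) + B*Sb (Sc (Sb (Sc (x)))) + (-3)*B*Sc (Sb (Sc (x))) - B*Sb (Sc (Sb (x))) + (3)*B*Sc (Sb (x)) + (3)*B*Sb (Sc (x)) + (-4)*B*Sc (x) + (-3)*B*Sb (x) + (4)*B*x) :=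
    Edd_step Sc C (B*C*(B+C)*(2*B+C)*(3*B+C)*(3*B+2*C)) _ _ _ hnz1 hcPi hL4
      (by simp only [map_add, map_sub, map_mul, map_neg, map_pow, map_ofNat, hcC, hcB, hcc, hw]; ring)
  have hL6 : (B*C*(B+C)*(2*B+C)*(3*B+C)*(3*B+2*C)) * (Edd Sb B (Edd Sc C (Edd Sb B (Edd Sc C (Edd Sb B (Edd Sc C x)))))) = (Sc (Sb (Sc (Sb (Sc (Sb (x)))))) - Sc (Sb (Sc (Sb (Sc (x))))) - Sb (Sc (Sb (Sc (Sb (x))))) + Sc (Sb (Sc (Sb (x)))) + Sb (Sc (Sb (Sc (x)))) - Sc (Sb (Sc (x))) - Sb (Sc (Sb (x))) + Sc (Sb (x)) + Sb (Sc (x)) - Sc (x) - Sb (x) + x) :=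
    Edd_step Sb B (B*C*(B+C)*(2*B+C)*(3*B+C)*(3*B+2*C)) _ _ _ hnz0 hbPi hL5
      (by simp only [map_add, map_sub, map_mul, map_neg, map_pow, map_ofNat, hbB, hbC, hbb, hw]; ring)
  have hR1 : (B*C*(B+C)*(2*B+C)*(3*B+C)*(3*B+2*C)) * (Edd Sb B x) = ((-2)*C^5*Sb (x) + (2)*C^5*x + (-15)*B*C^4*Sb (x) + (15)*B*C^4*x + (-40)*B^2*C^3*Sb (x) + (40)*B^2*C^3*x + (-45)*B^3*C^2*Sb (x) + (45)*B^3*C^2*x + (-18)*B^4*C*Sb (x) + (18)*B^4*C*x) :=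
    Edd_step Sb B (B*C*(B+C)*(2*B+C)*(3*B+C)*(3*B+2*C)) _ _ _ hnz0 hbPi h0
      (by simp only [map_add, map_sub, map_mul, map_neg, map_pow, map_ofNat, hbB, hbC, hbb, hw]; ring)
  have hR2 : (B*C*(B+C)*(2*B+C)*(3*B+C)*(3*B+2*C)) * (Edd Sc C (Edd Sb B x)) = ((-2)*C^4*Sb (x) + (2)*C^4*x + (2)*B*C^3*Sc (Sb (x)) + (-2)*B*C^3*Sc (x) + (-15)*B*C^3*Sb (x) + (15)*B*C^3*x + (13)*B^2*C^2*Sc (Sb (x)) + (-13)*B^2*C^2*Sc (x) + (-40)*B^2*C^2*Sb (x) + (40)*B^2*C^2*x + (27)*B^3*C*Sc (Sb (x)) + (-27)*B^3*C*Sc (x) + (-45)*B^3*C*Sb (x) + (45)*B^3*C*x + (18)*B^4*Sc (Sb (x)) + (-18)*B^4*Sc (x) + (-18)*B^4*Sb (x) + (18)*B^4*x) :=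
    Edd_step Sc C (B*C*(B+C)*(2*B+C)*(3*B+C)*(3*B+2*C)) _ _ _ hnz1 hcPi hR1
      (by simp only [map_add, map_sub, map_mul, map_neg, map_pow, map_ofNat, hcC, hcB, hcc, hw]; ring)
  have hR3 : (B*C*(B+C)*(2*B+C)*(3*B+C)*(3*B+2*C)) * (Edd Sb B (Edd Sc C (Edd Sb B x))) = ((-2)*C^3*Sb (Sc (Sb (x))) + (2)*C^3*Sc (Sb (x)) + (2)*C^3*Sb (Sc (x)) + (-2)*C^3*Sc (x) + (-6)*C^3*Sb (x) + (6)*C^3*x + (-5)*B*C^2*Sb (Sc (Sb (x))) + (13)*B*C^2*Sc (Sb (x)) + (5)*B*C^2*Sb (Sc (x)) + (-13)*B*C^2*Sc (x) + (-27)*B*C^2*Sb (x) + (27)*B*C^2*x + (-3)*B^2*C*Sb (Sc (Sb (x))) + (27)*B^2*C*Sc (Sb (x)) + (3)*B^2*C*Sb (Sc (x)) + (-27)*B^2*C*Sc (x) + (-39)*B^2*C*Sb (x) + (39)*B^2*C*x + (18)*B^3*Sc (Sb (x)) + (-18)*B^3*Sc (x) + (-18)*B^3*Sb (x) + (18)*B^3*x)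 :=
    Edd_step Sb B (B*C*(B+C)*(2*B+C)*(3*B+C)*(3*B+2*C)) _ _ _ hnz0 hbPi hR2
      (by simp only [map_add, map_sub, map_mul, map_neg, map_pow, map_ofNat, hbB, hbC, hbb, hw]; ring)
  have hR4 : (B*C*(B+C)*(2*B+C)*(3*B+C)*(3*B+2*C)) * (Edd Sc C (Edd Sb B (Edd Sc C (Edd Sb B x)))) = ((-2)*C^2*Sb (Sc (Sb (x))) + (2)*C^2*Sc (Sb (x)) + (2)*C^2*Sb (Sc (x)) + (-2)*C^2*Sc (x) + (-4)*C^2*Sb (x) + (4)*C^2*x + B*C*Sc (Sb (Sc (Sb (x)))) - B*C*Sc (Sb (Sc (x))) + (-5)*B*C*Sb (Sc (Sb (x))) + (10)*B*C*Sc (Sb (x)) + (5)*B*C*Sb (Sc (x)) + (-10)*B*C*Sc (x) + (-14)*B*C*Sb (x) + (14)*B*C*x + (3)*B^2*Sc (Sb (Sc (Sb (x)))) + (-3)*B^2*Sc (Sb (Sc (x))) + (-3)*B^2*Sb (Sc (Sb (x))) + (12)*B^2*Sc (Sb (x)) + (3)*B^2*Sb (Sc (x)) + (-12)*B^2*Sc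 (x) + (-12)*B^2*Sb (x) + (12)*B^2*x) :=
    Edd_step Sc C (B*C*(B+C)*(2*B+C)*(3*B+C)*(3*B+2*C)) _ _ _ hnz1 hcPi hR3
      (by simp only [map_add, map_sub, map_mul, map_neg, map_pow, map_ofNat, hcC, hcB, hcc, hw]; ring)
  have hR5 : (B*C*(B+C)*(2*B+C)*(3*B+C)*(3*B+2*C)) * (Edd Sb B (Edd Sc C (Edd Sb B (Edd Sc C (Edd Sb B x))))) = (-C*Sb (Sc (Sb (Sc (Sb (x))))) + C*Sc (Sb (Sc (Sb (x)))) + C*Sb (Sc (Sb (Sc (x)))) - C*Sc (Sb (Sc (x))) + (-3)*C*Sb (Sc (Sb (x))) + (3)*C*Sc (Sb (x)) + (3)*C*Sb (Sc (x)) + (-3)*C*Sc (x) + (-4)*C*Sb (x) + (4)*C*x + (3)*B*Sc (Sb (Sc (Sb (x)))) + (-3)*B*Sc (Sb (Sc (x))) + (-3)*B*Sb (Sc (Sb (x))) + (6)*B*Sc (Sb (x)) + (3)*B*Sb (Sc (x)) + (-6)*B*Sc (x) + (-6)*B*Sb (x) + (6)*B*x) :=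
    Edd_step Sb B (B*C*(B+C)*(2*B+C)*(3*B+C)*(3*B+2*C)) _ _ _ hnz0 hbPi hR4
      (by simp only [map_add, map_sub, map_mul, map_neg, map_pow, map_ofNat, hbB, hbC, hbb, hw]; ring)
  have hR6 : (B*C*(B+C)*(2*B+C)*(3*B+C)*(3*B+2*C)) * (Edd Sc C (Edd Sb B (Edd Sc C (Edd Sb B (Edd Sc C (Edd Sb B x)))))) = (Sc (Sb (Sc (Sb (Sc (Sb (x)))))) - Sc (Sb (Sc (Sb (Sc (x))))) - Sb (Sc (Sb (Sc (Sb (x))))) + Sc (Sb (Sc (Sb (x)))) + Sb (Sc (Sb (Sc (x)))) - Sc (Sb (Sc (x))) - Sb (Sc (Sb (x))) + Sc (Sb (x)) + Sb (Sc (x)) - Sc (x) - Sb (x) + x) :=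
    Edd_step Sc C (B*C*(B+C)*(2*B+C)*(3*B+C)*(3*B+2*C)) _ _ _ hnz1 hcPi hR5
      (by simp only [map_add, map_sub, map_mul, map_neg, map_pow, map_ofNat, hcC, hcB, hcc, hw]; ring)
  exact mul_left_cancel₀ hPin (hL6.trans hR6.symm)

lemma braid2 {K : Type*} [Field K] (Sb Sc : K →+* K) (B C : K) (hB : B ≠ 0) (hC : C ≠ 0)
    (hbC : Sb C = C) (hcB : Sc B = B)
    (hcom : ∀ x, Sb (Sc x) = Sc (Sb x)) (x : K) :
    Edd Sb B (Edd Sc C x) = Edd Sc C (Edd Sb B x) := by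
  simp only [Edd]
  rw [map_div₀, map_div₀, map_sub, map_sub, hbC, hcB, hcom]
  field_simp
  ring

lemma sqEdd {K : Type*} [Field K] (S : K →+* K) (B : K)
    (hSB : S B = -B) (hSS : ∀ x, S (S x) = x) (x : K) :
    Edd S B (Edd S B x) = 0 := by
  simp only [Edd, map_div₀, map_sub, hSB, hSS, div_neg]
  ring

section rank2

variable {β γ : FinLat n} {pb pc : Fin n → ℤ}

lemma rank2_sq (hββ : pairZ pb β = 2)
    (db : Module.End ℚ (MvPolynomial (Fin n) ℚ))
    (hdb : ∀ f, lin β * db f = f - sA β pb f) (f : MvPolynomial (Fin n) ℚ) :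
    db (db f) = 0 := by
  have hβ : β ≠ 0 := ne_zero_of_pairZ (p := pb) (by rw [hββ]; norm_num)
  apply iK_inj
  rw [End_to_Edd hββ db hdb, End_to_Edd hββ db hdb, map_zero]
  refine sqEdd _ _ ?_ (SK_SK hββ) _
  rw [SK_lin hββ β, hββ]
  push_cast
  ring

lemma rank2_hB {β : FinLat n} {pb : Fin n → ℤ} (hββ : pairZ pb β = 2) : iK (lin β) ≠ 0 :=
  iK_lin_ne_zero (ne_zero_of_pairZ (p := pb) (by rw [hββ]; norm_num))

variable (hββ : pairZ pb β = 2) (hγγ : pairZ pc γ = 2)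
  (db dc : Module.End ℚ (MvPolynomial (Fin n) ℚ))
  (hdb : ∀ f, lin β * db f = f - sA β pb f)
  (hdc : ∀ f, lin γ * dc f = f - sA γ pc f)

include hββ hγγ hdb hdc

lemma rank2_two (hbc : pairZ pc β = 0) (hcb : pairZ pb γ = 0)
    (f : MvPolynomial (Fin n) ℚ) : db (dc f) = dc (db f) := by
  apply iK_inj
  rw [End_to_Edd hββ db hdb, End_to_Edd hγγ dc hdc, End_to_Edd hγγ dc hdc,
    End_to_Edd hββ db hdb]
  refine braid2 _ _ _ _ (rank2_hB hββ) (rank2_hB hγγ) ?_ ?_ ?_ _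
  · rw [SK_lin hββ γ, hcb]; push_cast; ring
  · rw [SK_lin hγγ β, hbc]; push_cast; ring
  · exact kword2 hββ hγγ (pword2 (vword2 β γ pb pc hbc hcb))

lemma rank2_three (hbc : pairZ pc β = -1) (hcb : pairZ pb γ = -1)
    (f : MvPolynomial (Fin n) ℚ) : db (dc (db f)) = dc (db (dc f)) := by
  apply iK_inj
  rw [End_to_Edd hββ db hdb, End_to_Edd hγγ dc hdc, End_to_Edd hββ db hdb,
    End_to_Edd hγγ dc hdc, End_to_Edd hββ db hdb, End_to_Edd hγγ dc hdc]
  refine braid3 _ _ _ _ (rank2_hB hββ) (rank2_hB hγγ) ?_ ?_ ?_ ?_ ?_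
    (SK_SK hββ) (SK_SK hγγ) ?_ _
  · simpa using comb_ne hββ hγγ 1 1 (Or.inl (by rw [hcb]; norm_num))
  · rw [SK_lin hββ β, hββ]; push_cast; ring
  · rw [SK_lin hγγ γ, hγγ]; push_cast; ring
  · rw [SK_lin hββ γ, hcb]; push_cast; ring
  · rw [SK_lin hγγ β, hbc]; push_cast; ring
  · exact kword hββ hγγ (pword (vword3 β γ pb pc hββ hγγ hbc hcb))

lemma rank2_four (hbc : pairZ pc β = -1) (hcb : pairZ pb γ = -2)
    (f : MvPolynomial (Fin n) ℚ) :
    db (dc (db (dc f))) = dc (db (dc (db f))) := by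
  apply iK_inj
  rw [End_to_Edd hββ db hdb, End_to_Edd hγγ dc hdc, End_to_Edd hββ db hdb,
    End_to_Edd hγγ dc hdc, End_to_Edd hγγ dc hdc, End_to_Edd hββ db hdb,
    End_to_Edd hγγ dc hdc, End_to_Edd hββ db hdb]
  refine braid4 _ _ _ _ (rank2_hB hββ) (rank2_hB hγγ) ?_ ?_ ?_ ?_ ?_ ?_
    (SK_SK hββ) (SK_SK hγγ) ?_ _
  · simpa using comb_ne hββ hγγ 1 1 (Or.inr (by rw [hbc]; norm_num))
  · simpa using comb_ne hββ hγγ 2 1 (Or.inl (by rw [hcb]; norm_num))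
  · rw [SK_lin hββ β, hββ]; push_cast; ring
  · rw [SK_lin hγγ γ, hγγ]; push_cast; ring
  · rw [SK_lin hββ γ, hcb]; push_cast; ring
  · rw [SK_lin hγγ β, hbc]; push_cast; ring
  · exact kword4 hββ hγγ (pword4 (vword4 β γ pb pc hββ hγγ hbc hcb))

lemma rank2_six (hbc : pairZ pc β = -1) (hcb : pairZ pb γ = -3)
    (f : MvPolynomial (Fin n) ℚ) :
    db (dc (db (dc (db (dc f))))) = dc (db (dc (db (dc (db f))))) := by
  apply iK_inj
  rw [End_to_Edd hββ db hdb, End_to_Edd hγγ dc hdc, End_to_Edd hββ db hdb,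
    End_to_Edd hγγ dc hdc, End_to_Edd hββ db hdb, End_to_Edd hγγ dc hdc,
    End_to_Edd hγγ dc hdc, End_to_Edd hββ db hdb, End_to_Edd hγγ dc hdc,
    End_to_Edd hββ db hdb, End_to_Edd hγγ dc hdc, End_to_Edd hββ db hdb]
  refine braid6 _ _ _ _ (rank2_hB hββ) (rank2_hB hγγ) ?_ ?_ ?_ ?_ ?_ ?_ ?_ ?_
    (SK_SK hββ) (SK_SK hγγ) ?_ _
  · simpa using comb_ne hββ hγγ 1 1 (Or.inl (by rw [hcb]; norm_num))
  · simpa using comb_ne hββ hγγ 2 1 (Or.inl (by rw [hcb]; norm_num))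
  · simpa using comb_ne hββ hγγ 3 1 (Or.inl (by rw [hcb]; norm_num))
  · simpa using comb_ne hββ hγγ 3 2 (Or.inr (by rw [hbc]; norm_num))
  · rw [SK_lin hββ β, hββ]; push_cast; ring
  · rw [SK_lin hγγ γ, hγγ]; push_cast; ring
  · rw [SK_lin hββ γ, hcb]; push_cast; ring
  · rw [SK_lin hγγ β, hbc]; push_cast; ring
  · exact kword6 hββ hγγ (pword6 (vword6 β γ pb pc hββ hγγ hbc hcb))

end rank2

section rootfacts

variable {F : FiniteRootData n}

lemma fpair_single (c : Fin n → Fin n → ℤ) (k : Fin n) (b : FinLat n) :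
    fpair c (Pi.single k 1) b = ∑ i, b i * c i k := by
  unfold fpair
  refine Finset.sum_congr rfl fun i _ => ?_
  rw [Finset.sum_eq_single k]
  · simp
  · intro b' _ hb'; simp [Pi.single_eq_of_ne hb']
  · simp

lemma fpair_eq_pairZ (c : Fin n → Fin n → ℤ) (a b : FinLat n) :
    fpair c a b = pairZ (fun k => fpair c (Pi.single k 1) b) a := by
  have h : ∀ k, fpair c (Pi.single k 1) b = ∑ i, b i * c i k := fun k => fpair_single c k b
  simp only [pairZ, h]
  unfold fpair
  rw [Finset.sum_comm]
  refine Finset.sum_congr rfl fun k _ => ?_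
  rw [Finset.mul_sum]
  refine Finset.sum_congr rfl fun i _ => ?_
  ring

/-- `t i = ⟨α_i, θ∨⟩` -/
def tF (F : FiniteRootData n) (j : Fin n) : ℤ :=
  fpair F.cartan (Pi.single j 1) (F.coroot F.theta)

/-- `u i = ⟨θ, α_i∨⟩` -/
def uF (F : FiniteRootData n) (i : Fin n) : ℤ :=
  fpair F.cartan F.theta (F.coroot (Pi.single i 1))

/-- `c = ⟨θ, θ∨⟩` -/
def cF (F : FiniteRootData n) : ℤ := fpair F.cartan F.theta (F.coroot F.theta)

lemma cF_eq : cF F = pairZ (tF F) F.theta := fpair_eq_pairZ _ _ _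

lemma uF_eq (i : Fin n) : uF F i = pairZ (fun k => F.cartan i k) F.theta := by
  rw [uF, fpair_eq_pairZ]
  congr 1
  funext k
  rw [fpair_single, F.coroot_simple, Finset.sum_eq_single i]
  · simp
  · intro b' _ hb'; simp [Pi.single_eq_of_ne hb']
  · simp

lemma cartan_pairZ (i : Fin n) (a : FinLat n) :
    fpair F.cartan a (F.coroot (Pi.single i 1)) = pairZ (fun k => F.cartan i k) a := by
  rw [fpair_eq_pairZ]
  congr 1
  funext k
  rw [fpair_single, F.coroot_simple, Finset.sum_eq_single i]
  · simp
  · intro b' _ hb'; simp [Pi.single_eq_of_ne hb']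
  · simp

lemma theta_pairZ (a : FinLat n) :
    fpair F.cartan a (F.coroot F.theta) = pairZ (tF F) a := fpair_eq_pairZ _ _ _

lemma theta_pos (j : Fin n) : 1 ≤ F.theta j := by
  have h := F.theta_highest _ (F.simple_mem j)
  simpa using h j

lemma root_le {a : FinLat n} (ha : a ∈ F.roots) (j : Fin n) : a j ≤ F.theta j :=
  F.theta_highest a ha j

lemma root_le' {a : FinLat n} (ha : a ∈ F.roots) (j : Fin n) : -(a j) ≤ F.theta j := by
  have := F.theta_highest _ (F.neg_mem a ha) j
  simpa using this

lemma cF_zero_or_two (hn : 0 < n) : cF F = 0 ∨ cF F = 2 := by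
  have hr : F.theta - cF F • F.theta ∈ F.roots := F.refl_mem _ F.theta_mem _ F.theta_mem
  set c := cF F with hc
  have hne : c ≠ 1 := by
    intro h1
    apply F.zero_not_mem
    have : F.theta - c • F.theta = 0 := by rw [h1]; funext j; simp
    rwa [this] at hr
  let j : Fin n := ⟨0, hn⟩
  have h1 : F.theta j - c * F.theta j ≤ F.theta j := by
    have := root_le hr j; simpa using this
  have h2 : -(F.theta j - c * F.theta j) ≤ F.theta j := by
    have := root_le' hr j; simpa using this
  have hθ : 1 ≤ F.theta j := theta_pos j
  have hc0 : 0 ≤ c := by nlinarith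
  have hc2 : c ≤ 2 := by nlinarith
  omega

lemma uF_nonneg (i : Fin n) : 0 ≤ uF F i := by
  have hr : F.theta - uF F i • Pi.single i 1 ∈ F.roots :=
    F.refl_mem _ (F.simple_mem i) _ F.theta_mem
  have := root_le hr i
  simp only [Pi.sub_apply, Pi.smul_apply, Pi.single_eq_same, smul_eq_mul, mul_one] at this
  omega

lemma simple_sub_t_theta_mem (i : Fin n) :
    Pi.single i 1 - tF F i • F.theta ∈ F.roots :=
  F.refl_mem _ F.theta_mem _ (F.simple_mem i)

lemma tF_zero_or_one (hn : 2 ≤ n) (i : Fin n) : tF F i = 0 ∨ tF F i = 1 := by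
  have hr := simple_sub_t_theta_mem (F := F) i
  obtain ⟨j, hij⟩ : ∃ j : Fin n, j ≠ i := by
    refine ⟨if h : (i : ℕ) = 0 then ⟨1, by omega⟩ else ⟨0, by omega⟩, ?_⟩
    split_ifs with h <;> · simp only [ne_eq, Fin.ext_iff]; omega
  have h1 : -(tF F i * F.theta j) ≤ F.theta j := by
    have := root_le hr j
    simpa [Pi.single_eq_of_ne hij] using this
  have h2 : tF F i * F.theta j ≤ F.theta j := by
    have := root_le' hr j
    simpa [Pi.single_eq_of_ne hij] using this
  have hθj : 1 ≤ F.theta j := theta_pos j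
  have hi : 1 - tF F i * F.theta i ≤ F.theta i := by
    have := root_le hr i
    simpa using this
  have hθi : 1 ≤ F.theta i := theta_pos i
  have hb : -1 ≤ tF F i ∧ tF F i ≤ 1 := by constructor <;> nlinarith
  have : tF F i ≠ -1 := by
    intro h
    rw [h] at hi
    nlinarith
  omega

lemma tF_ne_zero_of_uF (hc : cF F = 2) (i : Fin n) (hu : 1 ≤ uF F i) : tF F i ≠ 0 := by
  intro ht
  have hr : F.theta - uF F i • Pi.single i 1 ∈ F.roots :=
    F.refl_mem _ (F.simple_mem i) _ F.theta_mem
  have hq : fpair F.cartan (F.theta - uF F i • Pi.single i 1) (F.coroot F.theta) = 2 := by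
    rw [theta_pairZ, pairZ_sub, pairZ_smul, pairZ_single, ← cF_eq, hc, ht]
    ring
  have hs : (F.theta - uF F i • Pi.single i 1)
      - fpair F.cartan (F.theta - uF F i • Pi.single i 1) (F.coroot F.theta) • F.theta
      ∈ F.roots := F.refl_mem _ F.theta_mem _ hr
  rw [hq] at hs
  have := root_le' hs i
  simp only [Pi.sub_apply, Pi.smul_apply, Pi.single_eq_same, smul_eq_mul, mul_one] at this
  have hθi : 1 ≤ F.theta i := theta_pos i
  omega

lemma uF_pos_of_tF (i : Fin n) (ht : tF F i = 1) : 1 ≤ uF F i := by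
  have hr := simple_sub_t_theta_mem (F := F) i
  rw [ht, one_smul] at hr
  have hq : fpair F.cartan (Pi.single i 1 - F.theta) (F.coroot (Pi.single i 1))
      = 2 - uF F i := by
    rw [cartan_pairZ, pairZ_sub, pairZ_single, ← uF_eq]
    simp [F.cartan_diag i]
  have hs : (Pi.single i 1 - F.theta)
      - fpair F.cartan (Pi.single i 1 - F.theta) (F.coroot (Pi.single i 1)) • Pi.single i 1
      ∈ F.roots := F.refl_mem _ (F.simple_mem i) _ hr
  rw [hq] at hs
  have := root_le' hs i
  simp only [Pi.sub_apply, Pi.smul_apply, Pi.single_eq_same, smul_eq_mul, mul_one] at this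
  have hθi : 1 ≤ F.theta i := theta_pos i
  omega

end rootfacts

/-- The alternating word `[i, j, i, j, …]` with `m` letters, beginning with `i`. -/
def altList {B : Type*} (i j : B) : ℕ → List B
  | 0 => []
  | m + 1 => i :: altList j i m

/-- The defining relations of the nil-Coxeter ring of a Coxeter matrix `M`:
the generators square to zero and satisfy the braid relations. -/
inductive NilCoxRel {B : Type*} (M : CoxeterMatrix B) :
    FreeAlgebra ℚ B → FreeAlgebra ℚ B → Prop
  | sq (i : B) : NilCoxRel M (FreeAlgebra.ι ℚ i * FreeAlgebra.ι ℚ i) 0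
  | braid (i j : B) (h : M i j ≠ 0) :
      NilCoxRel M (((altList i j (M i j)).map (FreeAlgebra.ι ℚ)).prod)
        (((altList j i (M i j)).map (FreeAlgebra.ι ℚ)).prod)

/-- The nil-Coxeter ring of a Coxeter matrix `M`, presented by generators `D_i`
with relations `D_i² = 0` and the braid relations; for the affine Weyl group this
is the affine nil-Coxeter ring `R_aff`, with `ℤ`-basis (here `ℚ`-basis)
`{D_w : w ∈ W_aff}`. -/
abbrev NilCoxeterRing {B : Type*} (M : CoxeterMatrix B) := RingQuot (NilCoxRel M)


lemma altList_two {B : Type*} (i j : B) : altList i j 2 = [i, j] := rfl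
lemma altList_three {B : Type*} (i j : B) : altList i j 3 = [i, j, i] := rfl
lemma altList_four {B : Type*} (i j : B) : altList i j 4 = [i, j, i, j] := rfl
lemma altList_six {B : Type*} (i j : B) : altList i j 6 = [i, j, i, j, i, j] := rfl
lemma altList_one {B : Type*} (i j : B) : altList i j 1 = [i] := rfl

section bridge

variable {F : FiniteRootData n}

lemma fpair_neg_right (c : Fin n → Fin n → ℤ) (a b : FinLat n) :
    fpair c a (-b) = -(fpair c a b) := by
  unfold fpair
  rw [← Finset.sum_neg_distrib]
  refine Finset.sum_congr rfl fun i _ => ?_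
  rw [← Finset.sum_neg_distrib]
  refine Finset.sum_congr rfl fun k _ => ?_
  simp

lemma sAct_simple_eq (F : FiniteRootData n) (k : Fin n) :
    F.sAct (Pi.single k 1) = sA (Pi.single k 1) (fun j => F.cartan k j) := by
  unfold FiniteRootData.sAct sA
  congr 1
  funext j
  rw [cartan_pairZ, pairZ_single]

lemma sAct_theta_eq (F : FiniteRootData n) :
    F.sAct F.theta = sA (-F.theta) (fun j => -(tF F j)) := by
  unfold FiniteRootData.sAct sA
  congr 1
  funext j
  rw [lin_neg]
  show _ - (tF F j : ℚ) • lin F.theta = _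
  push_cast
  rw [smul_neg, neg_smul, neg_neg]

lemma pairZ_negneg (p : Fin n → ℤ) (v : FinLat n) :
    pairZ (fun j => -(p j)) (-v) = pairZ p v := by
  unfold pairZ
  refine Finset.sum_congr rfl fun j _ => ?_
  simp

lemma pairZ_negtheta : pairZ (fun j => -(tF F j)) (-F.theta) = cF F := by
  rw [pairZ_negneg, ← cF_eq]

lemma hbc_theta (k : Fin n) :
    pairZ (fun j => F.cartan k j) (-F.theta) = -(uF F k) := by
  rw [pairZ_neg, ← uF_eq]

lemma hcb_theta (k : Fin n) :
    pairZ (fun j => -(tF F j)) (Pi.single k 1) = -(tF F k) := by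
  rw [pairZ_single]

lemma fpair_negtheta_simple (k : Fin n) :
    fpair F.cartan (-F.theta) (F.coroot (Pi.single k 1)) = -(uF F k) := by
  rw [cartan_pairZ, hbc_theta]

lemma fpair_simple_negtheta (k : Fin n) :
    fpair F.cartan (Pi.single k 1) (F.coroot (-F.theta)) = -(tF F k) := by
  rw [F.coroot_neg, fpair_neg_right]
  rfl

lemma fpair_cartan_simple (k l : Fin n) :
    fpair F.cartan (Pi.single k 1) (F.coroot (Pi.single l 1)) = F.cartan l k := by
  rw [cartan_pairZ, pairZ_single]

end bridge

/-- There is a well-defined ring homomorphism `π` from the affine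
nil-Coxeter ring `R_aff` (generated by the divided difference operators
`D_0, …, D_n`, subject to `D_i² = 0` and the braid relations of the affine Weyl
group, whose Coxeter matrix entries `m_{xy} = 2, 3, 4, 6, ∞` are determined by the
products `⟨β_x, β_y∨⟩⟨β_y, β_x∨⟩ = 0, 1, 2, 3, ≥ 4` of the roots
`β_0 = α_0 ≡ -θ, β_1 = α_1, …, β_n = α_n`) to the ring of BGG divided difference
operators acting on `H^*(G/B) = Sym(h*_ℚ)/(invariants)`, here realized on
`Sym(h*_ℚ)`, sending `D_i ↦ ∂_i` for `i ≠ 0` and `D_0 ↦ ∂_{-θ}`, where `θ` is the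
highest root of the finite root system.  (The index `none` plays the role of the
affine node `0`, and `some i` the role of the finite node `i`.) -/
theorem exists_nilCoxeter_ring_hom {n : ℕ} (F : FiniteRootData n)
    (M : CoxeterMatrix (Option (Fin n)))
    -- the affine Coxeter matrix is determined by the pairings of the roots
    -- `β_none = -θ`, `β_some i = α_i`:
    (hM : ∀ x y : Option (Fin n), x ≠ y →
      let β : Option (Fin n) → FinLat n :=
        fun o => Option.elim o (-F.theta) (fun i => Pi.single i 1)
      let p : ℤ := fpair F.cartan (β x) (F.coroot (β y))
        * fpair F.cartan (β y) (F.coroot (β x))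
      (p = 0 → M x y = 2) ∧ (p = 1 → M x y = 3) ∧ (p = 2 → M x y = 4) ∧
      (p = 3 → M x y = 6) ∧ (4 ≤ p → M x y = 0))
    -- the BGG operators `∂_i` of the simple roots and `∂_{-θ}` of `-θ`:
    (d : Fin n → Module.End ℚ (MvPolynomial (Fin n) ℚ))
    (hd : ∀ i f, FiniteRootData.lin (Pi.single i 1) * d i f
      = f - F.sAct (Pi.single i 1) f)
    (dθ : Module.End ℚ (MvPolynomial (Fin n) ℚ))
    (hdθ : ∀ f, FiniteRootData.lin (-F.theta) * dθ f = f - F.sAct F.theta f) :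
    ∃ π : NilCoxeterRing M →+* Module.End ℚ (MvPolynomial (Fin n) ℚ),
      (∀ i : Fin n,
        π (RingQuot.mkRingHom (NilCoxRel M) (FreeAlgebra.ι ℚ (some i))) = d i) ∧
      π (RingQuot.mkRingHom (NilCoxRel M) (FreeAlgebra.ι ℚ none)) = dθ := by
  classical
  have hn : 0 < n := by
    by_contra h
    push_neg at h
    have hn0 : n = 0 := by omega
    subst hn0
    exact F.zero_not_mem (by
      have h0 : F.theta = 0 := funext fun j => j.elim0
      rw [← h0]; exact F.theta_mem)
  -- the generator assignment
  set g : Option (Fin n) → Module.End ℚ (MvPolynomial (Fin n) ℚ) :=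
    fun o => Option.elim o dθ d with hgdef
  have hg_some : ∀ k, g (some k) = d k := fun _ => rfl
  have hg_none : g none = dθ := rfl
  -- reformulated operator equations
  have hd' : ∀ k, ∀ f, lin (Pi.single k 1) * d k f
      = f - sA (Pi.single k 1) (fun j => F.cartan k j) f := by
    intro k f; rw [← sAct_simple_eq]; exact hd k f
  have hdθ' : ∀ f, lin (-F.theta) * dθ f
      = f - sA (-F.theta) (fun j => -(tF F j)) f := by
    intro f; rw [← sAct_theta_eq]; exact hdθ f
  have hββs : ∀ k, pairZ (fun j => F.cartan k j) (Pi.single k 1) = 2 := by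
    intro k; rw [pairZ_single]; exact F.cartan_diag k
  have hββθ : cF F = 2 → pairZ (fun j => -(tF F j)) (-F.theta) = 2 := by
    intro h; rw [pairZ_negtheta]; exact h
  -- the degenerate case
  have hc0t : cF F = 0 → ∀ j, tF F j = 0 := by
    intro hc j
    by_cases hn2 : 2 ≤ n
    · have hterm : ∀ k ∈ Finset.univ, 0 ≤ F.theta k * tF F k := by
        intro k _
        rcases tF_zero_or_one (F := F) hn2 k with h | h <;>
          · rw [h]; have := theta_pos (F := F) k; nlinarith
      have hsum : ∑ k, F.theta k * tF F k = 0 := by rw [← pairZ, ← cF_eq]; exact hc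
      have hz := (Finset.sum_eq_zero_iff_of_nonneg hterm).mp hsum j (Finset.mem_univ j)
      have := theta_pos (F := F) j
      have := mul_eq_zero.mp hz
      omega
    · have hall : ∀ k : Fin n, k = j := by
        intro k
        have h1 := k.isLt
        have h2 := j.isLt
        exact Fin.ext (by omega)
      have hcc : cF F = F.theta j * tF F j := by
        rw [cF_eq, pairZ, Finset.sum_eq_single j]
        · intro b _ hb; exact absurd (hall b) hb
        · intro hb; exact absurd (Finset.mem_univ j) hb
      rw [hc] at hcc
      have := theta_pos (F := F) j
      have := mul_eq_zero.mp hcc.symm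
      omega
  have hdθ0 : cF F = 0 → dθ = 0 := by
    intro hc
    have hσ : F.sAct F.theta = AlgHom.id ℚ _ := by
      apply algHom_ext
      intro j
      simp only [FiniteRootData.sAct, aeval_X, AlgHom.id_apply]
      rw [show fpair F.cartan (Pi.single j 1) (F.coroot F.theta) = tF F j from rfl, hc0t hc j]
      simp
    apply LinearMap.ext
    intro f
    have h := hdθ f
    rw [hσ] at h
    rw [AlgHom.id_apply, sub_self] at h
    have hθne : -F.theta ≠ 0 := by
      intro hz
      have h1 := theta_pos (F := F) ⟨0, hn⟩
      have h2 := congrFun hz ⟨0, hn⟩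
      simp only [Pi.neg_apply, Pi.zero_apply, neg_eq_zero] at h2
      omega
    have hlin : lin (-F.theta) ≠ 0 := lin_ne_zero hθne
    rcases mul_eq_zero.mp h with h' | h'
    · exact absurd h' hlin
    · rw [LinearMap.zero_apply]; exact h'
  -- n = 1 special value
  have hn1p : ¬ (2 ≤ n) → ∀ k : Fin n, uF F k * tF F k = 2 * cF F := by
    intro h2 k
    have hall : ∀ j : Fin n, j = k := by
      intro j
      have h1 := j.isLt
      have h3 := k.isLt
      exact Fin.ext (by omega)
    have hu : uF F k = 2 * F.theta k := by
      rw [uF_eq, pairZ, Finset.sum_eq_single k]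
      · rw [F.cartan_diag k]; ring
      · intro b _ hb; exact absurd (hall b) hb
      · intro hb; exact absurd (Finset.mem_univ k) hb
    have hcc : cF F = F.theta k * tF F k := by
      rw [cF_eq, pairZ, Finset.sum_eq_single k]
      · intro b _ hb; exact absurd (hall b) hb
      · intro hb; exact absurd (Finset.mem_univ k) hb
    rw [hu, hcc]; ring
  -- squares
  have hsq : ∀ o : Option (Fin n), ∀ f, g o (g o f) = 0 := by
    intro o f
    cases o with
    | some k => exact rank2_sq (hββs k) (d k) (hd' k) f
    | none =>
      rcases cF_zero_or_two (F := F) hn with hc | hc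
      · rw [hg_none, hdθ0 hc]; simp
      · exact rank2_sq (hββθ hc) dθ hdθ' f
  -- braid relations
  have hbr : ∀ x y : Option (Fin n), M x y ≠ 0 →
      (((altList x y (M x y)).map g).prod : Module.End ℚ (MvPolynomial (Fin n) ℚ))
        = ((altList y x (M x y)).map g).prod := by
    intro x y hne0
    by_cases hxy : x = y
    · subst hxy; rfl
    obtain ⟨h0, h1, h2, h3, h4⟩ := hM x y hxy
    rcases x with _ | k <;> rcases y with _ | l
    · exact absurd rfl hxy
    · -- x = none, y = some l
      simp only [Option.elim] at h0 h1 h2 h3 h4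
      rw [fpair_negtheta_simple, fpair_simple_negtheta, neg_mul_neg] at h0 h1 h2 h3 h4
      rcases cF_zero_or_two (F := F) hn with hc | hc
      · have ht := hc0t hc l
        rw [h0 (by rw [ht]; ring), altList_two, altList_two]
        refine LinearMap.ext fun f => ?_
        simp only [List.map_cons, List.map_nil, List.prod_cons, List.prod_nil, mul_one,
          Module.End.mul_apply, hg_some, hg_none, hdθ0 hc]
        simp
      · by_cases hn2 : 2 ≤ n
        · rcases tF_zero_or_one (F := F) hn2 l with ht | ht
          · have hu0 : uF F l = 0 := by
              by_contra hu
              have h1u : 1 ≤ uF F l := by have := uF_nonneg (F := F) l; omega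
              exact tF_ne_zero_of_uF hc l h1u ht
            rw [h0 (by rw [ht]; ring), altList_two, altList_two]
            refine LinearMap.ext fun f => ?_
            simp only [List.map_cons, List.map_nil, List.prod_cons, List.prod_nil, mul_one,
              Module.End.mul_apply, hg_some, hg_none]
            exact rank2_two (hββθ hc) (hββs l) dθ (d l) hdθ' (hd' l)
              (by rw [hbc_theta, hu0]; ring) (by rw [hcb_theta, ht]; ring) f
          · have hu1 := uF_pos_of_tF (F := F) l ht
            have hcases : uF F l = 1 ∨ uF F l = 2 ∨ uF F l = 3 ∨ 4 ≤ uF F l := by omega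
            rcases hcases with hu | hu | hu | hu
            · rw [h1 (by rw [ht, hu]; ring), altList_three, altList_three]
              refine LinearMap.ext fun f => ?_
              simp only [List.map_cons, List.map_nil, List.prod_cons, List.prod_nil, mul_one,
                Module.End.mul_apply, hg_some, hg_none]
              exact rank2_three (hββθ hc) (hββs l) dθ (d l) hdθ' (hd' l)
                (by rw [hbc_theta, hu]) (by rw [hcb_theta, ht]) f
            · rw [h2 (by rw [ht, hu]; ring), altList_four, altList_four]
              refine LinearMap.ext fun f => ?_
              simp only [List.map_cons, List.map_nil, List.prod_cons, List.prod_nil, mul_one,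
                Module.End.mul_apply, hg_some, hg_none]
              exact (rank2_four (hββs l) (hββθ hc) (d l) dθ (hd' l) hdθ'
                (by rw [hcb_theta, ht]) (by rw [hbc_theta, hu]) f).symm
            · rw [h3 (by rw [ht, hu]; ring), altList_six, altList_six]
              refine LinearMap.ext fun f => ?_
              simp only [List.map_cons, List.map_nil, List.prod_cons, List.prod_nil, mul_one,
                Module.End.mul_apply, hg_some, hg_none]
              exact (rank2_six (hββs l) (hββθ hc) (d l) dθ (hd' l) hdθ'
                (by rw [hcb_theta, ht]) (by rw [hbc_theta, hu]) f).symm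
            · exact absurd (h4 (by rw [ht]; nlinarith)) hne0
        · refine absurd (h4 ?_) hne0
          have := hn1p hn2 l
          rw [hc] at this
          omega
    · -- x = some k, y = none
      simp only [Option.elim] at h0 h1 h2 h3 h4
      rw [fpair_simple_negtheta, fpair_negtheta_simple, neg_mul_neg] at h0 h1 h2 h3 h4
      rcases cF_zero_or_two (F := F) hn with hc | hc
      · have ht := hc0t hc k
        rw [h0 (by rw [ht]; ring), altList_two, altList_two]
        refine LinearMap.ext fun f => ?_
        simp only [List.map_cons, List.map_nil, List.prod_cons, List.prod_nil, mul_one,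
          Module.End.mul_apply, hg_some, hg_none, hdθ0 hc]
        simp
      · by_cases hn2 : 2 ≤ n
        · rcases tF_zero_or_one (F := F) hn2 k with ht | ht
          · have hu0 : uF F k = 0 := by
              by_contra hu
              have h1u : 1 ≤ uF F k := by have := uF_nonneg (F := F) k; omega
              exact tF_ne_zero_of_uF hc k h1u ht
            rw [h0 (by rw [ht]; ring), altList_two, altList_two]
            refine LinearMap.ext fun f => ?_
            simp only [List.map_cons, List.map_nil, List.prod_cons, List.prod_nil, mul_one,
              Module.End.mul_apply, hg_some, hg_none]
            exact rank2_two (hββs k) (hββθ hc) (d k) dθ (hd' k) hdθ'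
              (by rw [hcb_theta, ht]; ring) (by rw [hbc_theta, hu0]; ring) f
          · have hu1 := uF_pos_of_tF (F := F) k ht
            have hcases : uF F k = 1 ∨ uF F k = 2 ∨ uF F k = 3 ∨ 4 ≤ uF F k := by omega
            rcases hcases with hu | hu | hu | hu
            · rw [h1 (by rw [ht, hu]; ring), altList_three, altList_three]
              refine LinearMap.ext fun f => ?_
              simp only [List.map_cons, List.map_nil, List.prod_cons, List.prod_nil, mul_one,
                Module.End.mul_apply, hg_some, hg_none]
              exact rank2_three (hββs k) (hββθ hc) (d k) dθ (hd' k) hdθ'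
                (by rw [hcb_theta, ht]) (by rw [hbc_theta, hu]) f
            · rw [h2 (by rw [ht, hu]; ring), altList_four, altList_four]
              refine LinearMap.ext fun f => ?_
              simp only [List.map_cons, List.map_nil, List.prod_cons, List.prod_nil, mul_one,
                Module.End.mul_apply, hg_some, hg_none]
              exact rank2_four (hββs k) (hββθ hc) (d k) dθ (hd' k) hdθ'
                (by rw [hcb_theta, ht]) (by rw [hbc_theta, hu]) f
            · rw [h3 (by rw [ht, hu]; ring), altList_six, altList_six]
              refine LinearMap.ext fun f => ?_
              simp only [List.map_cons, List.map_nil, List.prod_cons, List.prod_nil, mul_one,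
                Module.End.mul_apply, hg_some, hg_none]
              exact rank2_six (hββs k) (hββθ hc) (d k) dθ (hd' k) hdθ'
                (by rw [hcb_theta, ht]) (by rw [hbc_theta, hu]) f
            · exact absurd (h4 (by rw [ht]; nlinarith)) hne0
        · refine absurd (h4 ?_) hne0
          have := hn1p hn2 k
          rw [hc] at this
          rw [mul_comm (tF F k)]
          omega
    · -- x = some k, y = some l
      simp only [Option.elim] at h0 h1 h2 h3 h4
      rw [fpair_cartan_simple, fpair_cartan_simple] at h0 h1 h2 h3 h4
      have hkl : k ≠ l := fun h => hxy (by rw [h])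
      have ha := F.cartan_offdiag l k (Ne.symm hkl)
      have hb := F.cartan_offdiag k l hkl
      have hcases : (F.cartan l k = 0 ∧ F.cartan k l = 0)
          ∨ (F.cartan l k = -1 ∧ F.cartan k l = -1)
          ∨ (F.cartan l k = -1 ∧ F.cartan k l = -2)
          ∨ (F.cartan l k = -2 ∧ F.cartan k l = -1)
          ∨ (F.cartan l k = -1 ∧ F.cartan k l = -3)
          ∨ (F.cartan l k = -3 ∧ F.cartan k l = -1)
          ∨ 4 ≤ F.cartan l k * F.cartan k l := by
        by_cases ha0 : F.cartan l k = 0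
        · exact Or.inl ⟨ha0, F.cartan_symm_zero l k ha0⟩
        by_cases hb0 : F.cartan k l = 0
        · exact Or.inl ⟨F.cartan_symm_zero k l hb0, hb0⟩
        have ha1 : F.cartan l k ≤ -1 := by omega
        have hb1 : F.cartan k l ≤ -1 := by omega
        by_cases haa : F.cartan l k = -1
        · rcases (by omega : F.cartan k l = -1 ∨ F.cartan k l = -2 ∨ F.cartan k l = -3
              ∨ F.cartan k l ≤ -4) with h | h | h | h
          · exact Or.inr (Or.inl ⟨haa, h⟩)
          · exact Or.inr (Or.inr (Or.inl ⟨haa, h⟩))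
          · exact Or.inr (Or.inr (Or.inr (Or.inr (Or.inl ⟨haa, h⟩))))
          · refine Or.inr (Or.inr (Or.inr (Or.inr (Or.inr (Or.inr ?_)))))
            rw [haa]; nlinarith
        by_cases hbb : F.cartan k l = -1
        · rcases (by omega : F.cartan l k = -2 ∨ F.cartan l k = -3
              ∨ F.cartan l k ≤ -4) with h | h | h
          · exact Or.inr (Or.inr (Or.inr (Or.inl ⟨h, hbb⟩)))
          · exact Or.inr (Or.inr (Or.inr (Or.inr (Or.inr (Or.inl ⟨h, hbb⟩)))))
          · refine Or.inr (Or.inr (Or.inr (Or.inr (Or.inr (Or.inr ?_)))))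
            rw [hbb]; nlinarith
        · refine Or.inr (Or.inr (Or.inr (Or.inr (Or.inr (Or.inr ?_)))))
          have h2a : F.cartan l k ≤ -2 := by omega
          have h2b : F.cartan k l ≤ -2 := by omega
          nlinarith
      rcases hcases with ⟨hA, hB⟩ | ⟨hA, hB⟩ | ⟨hA, hB⟩ | ⟨hA, hB⟩ | ⟨hA, hB⟩ | ⟨hA, hB⟩ | hAB
      · rw [h0 (by rw [hA, hB]; ring), altList_two, altList_two]
        refine LinearMap.ext fun f => ?_
        simp only [List.map_cons, List.map_nil, List.prod_cons, List.prod_nil, mul_one,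
          Module.End.mul_apply, hg_some]
        exact rank2_two (hββs k) (hββs l) (d k) (d l) (hd' k) (hd' l)
          (by rw [pairZ_single]; exact hA) (by rw [pairZ_single]; exact hB) f
      · rw [h1 (by rw [hA, hB]; ring), altList_three, altList_three]
        refine LinearMap.ext fun f => ?_
        simp only [List.map_cons, List.map_nil, List.prod_cons, List.prod_nil, mul_one,
          Module.End.mul_apply, hg_some]
        exact rank2_three (hββs k) (hββs l) (d k) (d l) (hd' k) (hd' l)
          (by rw [pairZ_single]; exact hA) (by rw [pairZ_single]; exact hB) f
      · rw [h2 (by rw [hA, hB]; ring), altList_four, altList_four]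
        refine LinearMap.ext fun f => ?_
        simp only [List.map_cons, List.map_nil, List.prod_cons, List.prod_nil, mul_one,
          Module.End.mul_apply, hg_some]
        exact rank2_four (hββs k) (hββs l) (d k) (d l) (hd' k) (hd' l)
          (by rw [pairZ_single]; exact hA) (by rw [pairZ_single]; exact hB) f
      · rw [h2 (by rw [hA, hB]; ring), altList_four, altList_four]
        refine LinearMap.ext fun f => ?_
        simp only [List.map_cons, List.map_nil, List.prod_cons, List.prod_nil, mul_one,
          Module.End.mul_apply, hg_some]
        exact (rank2_four (hββs l) (hββs k) (d l) (d k) (hd' l) (hd' k)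
          (by rw [pairZ_single]; exact hB) (by rw [pairZ_single]; exact hA) f).symm
      · rw [h3 (by rw [hA, hB]; ring), altList_six, altList_six]
        refine LinearMap.ext fun f => ?_
        simp only [List.map_cons, List.map_nil, List.prod_cons, List.prod_nil, mul_one,
          Module.End.mul_apply, hg_some]
        exact rank2_six (hββs k) (hββs l) (d k) (d l) (hd' k) (hd' l)
          (by rw [pairZ_single]; exact hA) (by rw [pairZ_single]; exact hB) f
      · rw [h3 (by rw [hA, hB]; ring), altList_six, altList_six]
        refine LinearMap.ext fun f => ?_
        simp only [List.map_cons, List.map_nil, List.prod_cons, List.prod_nil, mul_one,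
          Module.End.mul_apply, hg_some]
        exact (rank2_six (hββs l) (hββs k) (d l) (d k) (hd' l) (hd' k)
          (by rw [pairZ_single]; exact hB) (by rw [pairZ_single]; exact hA) f).symm
      · exact absurd (h4 hAB) hne0
  -- assemble the ring hom
  have hrel : ∀ ⦃a b : FreeAlgebra ℚ (Option (Fin n))⦄, NilCoxRel M a b →
      (FreeAlgebra.lift ℚ g).toRingHom a = (FreeAlgebra.lift ℚ g).toRingHom b := by
    intro a b hab
    induction hab with
    | sq i =>
      simp only [AlgHom.toRingHom_eq_coe, RingHom.coe_coe, map_mul, map_zero,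
        FreeAlgebra.lift_ι_apply]
      exact LinearMap.ext fun f => by
        rw [Module.End.mul_apply, LinearMap.zero_apply]; exact hsq i f
    | braid i j hij =>
      simp only [AlgHom.toRingHom_eq_coe, RingHom.coe_coe, map_list_prod, List.map_map]
      have hcomp : ((FreeAlgebra.lift ℚ g) ∘ FreeAlgebra.ι ℚ) = g := by
        funext o; simp [FreeAlgebra.lift_ι_apply]
      rw [hcomp]
      exact hbr i j hij
  refine ⟨RingQuot.lift ⟨(FreeAlgebra.lift ℚ g).toRingHom, hrel⟩, fun i => ?_, ?_⟩
  · rw [RingQuot.lift_mkRingHom_apply]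
    simp only [AlgHom.toRingHom_eq_coe, RingHom.coe_coe, FreeAlgebra.lift_ι_apply]
    exact hg_some i
  · rw [RingQuot.lift_mkRingHom_apply]
    simp only [AlgHom.toRingHom_eq_coe, RingHom.coe_coe, FreeAlgebra.lift_ι_apply]
    exact hg_none
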